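/- Let H be a real Hilbert space, T_A nonexpansive, B (1/L)-cocoercive and μ-strongly monotone, γ ∈ (0, 2/L), T = T_A ∘ (I - γB), and S = I - T. If x_* is a fixed point of T, then S is quasi-ν-strongly monotone at x_*: ⟨x - x_*, Sx⟩ ≥ ν‖x - x_*‖² for all x ∈ H, where ν = 1 - √(1 - 2γμ + μγ²L). -/

import Mathlib

/-!
Write `d = x - x⋆` and `b = B x - B x⋆`. Cocoercivity gives `‖b‖² ≤ L ⟪d, b⟫`, so
`‖d - γ b‖² ≤ ‖d‖² - γ (2 - γL) ⟪d, b⟫`, and since `γ (2 - γL) ≥ 0` strong monotonicity bounds this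
by `(1 - 2γμ + μγ²L) ‖d‖²`. Hence the forward step `I - γB` is `ρ`-Lipschitz with `ρ = √(1 - 2γμ + μγ²L)`, and
`‖T x - x⋆‖ ≤ ρ ‖d‖` since `T_A` is nonexpansive and `x⋆ = T x⋆`. Finally
`⟪d, x - T x⟫ = ‖d‖² - ⟪d, T x - x⋆⟫ ≥ (1 - ρ) ‖d‖²` by Cauchy–Schwarz.
-/

section

open RealInnerProductSpace

variable {E : Type*} [NormedAddCommGroup E] [InnerProductSpace ℝ E]

theorem norm_sub_smul_sq_le_of_cocoercive_of_strongMono {d b : E} {L μ γ : ℝ} (hL : 0 < L)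
    (hcoco : 1 / L * ‖b‖ ^ 2 ≤ ⟪d, b⟫) (hmono : μ * ‖d‖ ^ 2 ≤ ⟪d, b⟫)
    (hγ : 0 ≤ γ) (hγ2 : γ ≤ 2 / L) :
    ‖d - γ • b‖ ^ 2 ≤ (1 - 2 * γ * μ + μ * γ ^ 2 * L) * ‖d‖ ^ 2 := by
  have hb : ‖b‖ ^ 2 ≤ L * ⟪d, b⟫ := by
    rwa [one_div, inv_mul_le_iff₀ hL] at hcoco
  have hstep : 0 ≤ γ * (2 - γ * L) :=
    mul_nonneg hγ (by linarith [(le_div_iff₀ hL).mp hγ2])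
  calc ‖d - γ • b‖ ^ 2 = ‖d‖ ^ 2 - 2 * γ * ⟪d, b⟫ + γ ^ 2 * ‖b‖ ^ 2 := by
        rw [norm_sub_sq_real, real_inner_smul_right, norm_smul, mul_pow, Real.norm_eq_abs, sq_abs]
        ring
    _ ≤ ‖d‖ ^ 2 - γ * (2 - γ * L) * ⟪d, b⟫ := by
        nlinarith [mul_le_mul_of_nonneg_left hb (sq_nonneg γ)]
    _ ≤ ‖d‖ ^ 2 - γ * (2 - γ * L) * (μ * ‖d‖ ^ 2) := by
        gcongr
    _ = (1 - 2 * γ * μ + μ * γ ^ 2 * L) * ‖d‖ ^ 2 := by ring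

theorem norm_forwardStep_sub_le {B : E → E} {L μ γ : ℝ} (hL : 0 < L)
    (hcoco : ∀ x y, 1 / L * ‖B x - B y‖ ^ 2 ≤ ⟪x - y, B x - B y⟫)
    (hmono : ∀ x y, μ * ‖x - y‖ ^ 2 ≤ ⟪x - y, B x - B y⟫)
    (hγ : 0 ≤ γ) (hγ2 : γ ≤ 2 / L) (x y : E) :
    ‖(x - γ • B x) - (y - γ • B y)‖ ≤ √(1 - 2 * γ * μ + μ * γ ^ 2 * L) * ‖x - y‖ := by
  have hsq := norm_sub_smul_sq_le_of_cocoercive_of_strongMono hL (hcoco x y) (hmono x y) hγ hγ2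
  rw [← Real.sqrt_sq (norm_nonneg (x - y)), ← Real.sqrt_mul' _ (sq_nonneg _),
    sub_sub_sub_comm, ← smul_sub]
  exact Real.le_sqrt_of_sq_le hsq

theorem one_sub_mul_norm_sq_le_inner_of_norm_sub_le {x y z : E} {ρ : ℝ}
    (h : ‖z - y‖ ≤ ρ * ‖x - y‖) : (1 - ρ) * ‖x - y‖ ^ 2 ≤ ⟪x - y, x - z⟫ := by
  have hsplit : ⟪x - y, x - z⟫ = ‖x - y‖ ^ 2 - ⟪x - y, z - y⟫ := by
    rw [← real_inner_self_eq_norm_sq, ← inner_sub_right, sub_sub_sub_cancel_right]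
  have hcs : ⟪x - y, z - y⟫ ≤ ‖x - y‖ * (ρ * ‖x - y‖) :=
    (real_inner_le_norm _ _).trans (mul_le_mul_of_nonneg_left h (norm_nonneg _))
  nlinarith
end

theorem stmt_6_general {H : Type*} [NormedAddCommGroup H] [InnerProductSpace ℝ H]
    (TA B : H → H) (L μ γ : ℝ) (hL : 0 < L)
    (hTA : ∀ x y, ‖TA x - TA y‖ ≤ ‖x - y‖)
    (hB : ∀ x y, (inner ℝ (x - y) (B x - B y) : ℝ) ≥ (1 / L) * ‖B x - B y‖ ^ 2)
    (hBmono : ∀ x y, (inner ℝ (x - y) (B x - B y) : ℝ) ≥ μ * ‖x - y‖ ^ 2)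
    (hγ : 0 < γ) (hγ2 : γ < 2 / L)
    (xstar : H) (hfix : TA (xstar - γ • B xstar) = xstar) :
    ∀ x, (inner ℝ (x - xstar) (x - TA (x - γ • B x)) : ℝ) ≥
      (1 - Real.sqrt (1 - 2 * γ * μ + μ * γ ^ 2 * L)) * ‖x - xstar‖ ^ 2 := by
  intro x
  apply one_sub_mul_norm_sq_le_inner_of_norm_sub_le
  calc ‖TA (x - γ • B x) - xstar‖ = ‖TA (x - γ • B x) - TA (xstar - γ • B xstar)‖ := by
        rw [hfix]
    _ ≤ ‖(x - γ • B x) - (xstar - γ • B xstar)‖ := hTA _ _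
    _ ≤ √(1 - 2 * γ * μ + μ * γ ^ 2 * L) * ‖x - xstar‖ :=
        norm_forwardStep_sub_le hL hB hBmono hγ.le hγ2.le x xstar

theorem stmt_6 {H : Type*} [NormedAddCommGroup H] [InnerProductSpace ℝ H] [CompleteSpace H]
    (TA B : H → H) (L μ γ : ℝ) (hL : 0 < L) (hμ : 0 < μ)
    (hTA : ∀ x y, ‖TA x - TA y‖ ≤ ‖x - y‖)
    (hB : ∀ x y, (inner ℝ (x - y) (B x - B y) : ℝ) ≥ (1 / L) * ‖B x - B y‖ ^ 2)
    (hBmono : ∀ x y, (inner ℝ (x - y) (B x - B y) : ℝ) ≥ μ * ‖x - y‖ ^ 2)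
    (hγ : 0 < γ) (hγ2 : γ < 2 / L)
    (xstar : H) (hfix : TA (xstar - γ • B xstar) = xstar) :
    ∀ x, (inner ℝ (x - xstar) (x - TA (x - γ • B x)) : ℝ) ≥
      (1 - Real.sqrt (1 - 2 * γ * μ + μ * γ ^ 2 * L)) * ‖x - xstar‖ ^ 2 :=
  stmt_6_general TA B L μ γ hL hTA hB hBmono hγ hγ2 xstar hfix
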